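/- Let G be a (K₂ ∪ 2K₁)-free graph and S a cut set of G such that G − S has exactly two components, both of which are nontrivial. Then each of the two components of G − S is a complete graph. -/

import Mathlib

open SimpleGraph

/-- The disjoint union of an edge (on vertices 0,1) and `k` isolated vertices. -/
def K2uK (k : ℕ) : SimpleGraph (Fin (k + 2)) :=
  SimpleGraph.fromRel (fun a b => a = 0 ∧ b = 1)

/-- `G` contains no induced copy of `H`. -/
def HFree {α β : Type*} (H : SimpleGraph α) (G : SimpleGraph β) : Prop :=
  IsEmpty (H ↪g G)

/-- The number of connected components of a graph. -/
noncomputable def numComp {V : Type*} (G : SimpleGraph V) : ℕ :=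
  Nat.card G.ConnectedComponent

/-- `S` is a cut set of `G`: removing `S` leaves at least two components. -/
def IsCutSet {V : Type*} (G : SimpleGraph V) (S : Set V) : Prop :=
  2 ≤ numComp (G.induce (Sᶜ : Set V))

/-!
There are no edges between distinct components of `G − S`. So if one component contained two
nonadjacent vertices `a`, `b`, then `a`, `b` and any edge `xv` of the other, nontrivial, component
would induce `K₂ ∪ 2K₁` in `G`.
-/

lemma HFree.of_embedding {α β γ : Type*} {H : SimpleGraph α} {G : SimpleGraph β}
    {G' : SimpleGraph γ} (hG : HFree H G) (e : G' ↪g G) : HFree H G' :=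
  ⟨fun f => hG.false (e.comp f)⟩

lemma K2uK_two_adj {i j : Fin 4} : (K2uK 2).Adj i j ↔ i = 0 ∧ j = 1 ∨ i = 1 ∧ j = 0 := by
  fin_cases i <;> fin_cases j <;> simp [K2uK]

section

variable {V : Type*} {G : SimpleGraph V}

lemma SimpleGraph.ConnectedComponent.not_adj_of_ne {C D : G.ConnectedComponent} (hCD : C ≠ D)
    ⦃a b : V⦄ (ha : a ∈ C.supp) (hb : b ∈ D.supp) : ¬G.Adj a b := fun hab =>
  hCD (ha ▸ hb ▸ connectedComponentMk_eq_of_adj hab)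

lemma SimpleGraph.ConnectedComponent.exists_adj_of_not_subsingleton (C : G.ConnectedComponent)
    (hC : ¬C.supp.Subsingleton) : ∃ x ∈ C.supp, ∃ y ∈ C.supp, G.Adj x y := by
  obtain ⟨x, hx, y, hy, hxy⟩ := Set.not_subsingleton_iff.mp hC
  obtain ⟨w⟩ := C.reachable_of_mem_supp hx hy
  have hadj := w.adj_snd (w.not_nil_of_ne hxy)
  exact ⟨x, hx, _, C.mem_supp_of_adj_mem_supp hx hadj, hadj⟩

lemma HFree.adj_of_not_adj_edge (hG : HFree (K2uK 2) G) {x v a b : V} (hxv : G.Adj x v)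
    (hab : a ≠ b) (hax : ¬G.Adj a x) (hav : ¬G.Adj a v) (hbx : ¬G.Adj b x)
    (hbv : ¬G.Adj b v) : G.Adj a b := by
  by_contra hnab
  have hxa : x ≠ a := fun h => hav (h ▸ hxv)
  have hxb : x ≠ b := fun h => hbv (h ▸ hxv)
  have hva : v ≠ a := fun h => hax (h ▸ hxv.symm)
  have hvb : v ≠ b := fun h => hbx (h ▸ hxv.symm)
  refine hG.false ⟨⟨![x, v, a, b], fun i j hij => ?_⟩, fun {i j} => ?_⟩
  · fin_cases i <;> fin_cases j <;> simp_all [eq_comm, hxv.ne]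
  · change G.Adj (![x, v, a, b] i) (![x, v, a, b] j) ↔ _
    rw [K2uK_two_adj]
    fin_cases i <;> fin_cases j <;> simp_all [adj_comm]

lemma HFree.isClique_supp_of_ne (hG : HFree (K2uK 2) G) {C D : G.ConnectedComponent}
    (hCD : C ≠ D) (hC : ¬C.supp.Subsingleton) : G.IsClique D.supp := by
  obtain ⟨x, hx, v, hv, hxv⟩ := C.exists_adj_of_not_subsingleton hC
  intro a ha b hb hab
  have hDC := ConnectedComponent.not_adj_of_ne (Ne.symm hCD)
  exact hG.adj_of_not_adj_edge hxv hab (hDC ha hx) (hDC ha hv) (hDC hb hx) (hDC hb hv)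

end

theorem stmt_6_general {V : Type*} (G : SimpleGraph V)
    (hfree : HFree (K2uK 2) G) (S : Set V)
    (h2 : numComp (G.induce (Sᶜ : Set V)) = 2)
    (hnontriv : ∀ D : (G.induce (Sᶜ : Set V)).ConnectedComponent, ¬ D.supp.Subsingleton) :
    ∀ D : (G.induce (Sᶜ : Set V)).ConnectedComponent,
      ∀ a ∈ D.supp, ∀ b ∈ D.supp, a ≠ b → (G.induce (Sᶜ : Set V)).Adj a b := by
  intro D
  obtain ⟨E, hED⟩ : ∃ E, E ≠ D := by
    obtain ⟨c₁, c₂, hc, -⟩ := Nat.card_eq_two_iff.mp h2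
    by_cases h : c₁ = D
    exacts [⟨c₂, h ▸ hc.symm⟩, ⟨c₁, h⟩]
  exact (hfree.of_embedding (Embedding.induce _)).isClique_supp_of_ne hED (hnontriv E)

theorem stmt_6 {V : Type*} [Fintype V] (G : SimpleGraph V)
    (hfree : HFree (K2uK 2) G) (S : Set V) (hcut : IsCutSet G S)
    (h2 : numComp (G.induce (Sᶜ : Set V)) = 2)
    (hnontriv : ∀ D : (G.induce (Sᶜ : Set V)).ConnectedComponent, ¬ D.supp.Subsingleton) :
    ∀ D : (G.induce (Sᶜ : Set V)).ConnectedComponent,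
      ∀ a ∈ D.supp, ∀ b ∈ D.supp, a ≠ b → (G.induce (Sᶜ : Set V)).Adj a b :=
  stmt_6_general G hfree S h2 hnontriv
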